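/- arXiv:2404.13617 — 4 statements merged into one kernel-verified Lean document; each statement's English description precedes it below -/
import Mathlib

section
/- Let V be a type with a directed-edge relation adj : V → V → Prop, and let S ⊆ V be a fanout-free cone rooted at v, i.e., v ∈ S, every node of S has a directed path (reflexive-transitive closure of adj) to v, and every node n ∈ S with n ≠ v has all of its out-neighbors in S. Then every directed path that starts at a node n ∈ S and ends at a node w ∉ S passes through the root v; that is, if Relation.ReflTransGen adj n w with n ∈ S and w ∉ S, then there is a directed path from n to v and a directed path from v to w. -/
/-- `S` is a fanout-free cone rooted at `v` for the directed-edge relation `adj`: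
(i) `v ∈ S`; (ii) every node of `S` has a directed path to `v`;
(iii) every node `n ∈ S` with `n ≠ v` has all of its out-neighbors in `S`. -/
def IsFanoutFreeCone {V : Type*} (adj : V → V → Prop) (S : Set V) (v : V) : Prop :=
  v ∈ S ∧ (∀ n ∈ S, Relation.ReflTransGen adj n v) ∧
    (∀ n ∈ S, n ≠ v → ∀ m, adj n m → m ∈ S)

theorem path_leaving_cone_passes_through_root {V : Type*} (adj : V → V → Prop)
    (S : Set V) (v : V) (hS : IsFanoutFreeCone adj S v)
    {n w : V} (hn : n ∈ S) (hw : w ∉ S) (hpath : Relation.ReflTransGen adj n w) :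
    Relation.ReflTransGen adj n v ∧ Relation.ReflTransGen adj v w := by
  obtain ⟨hv, hto, hcl⟩ := hS
  refine ⟨hto n hn, ?_⟩
  induction hpath using Relation.ReflTransGen.head_induction_on with
  | refl => exact absurd hn hw
  | head h p ih =>
    rename_i a b
    by_cases hav : a = v
    · exact hav ▸ Relation.ReflTransGen.head h p
    · exact ih (hcl a hn hav b h)
end

section
/- Let V be a type with a directed-edge relation adj : V → V → Prop. If S_x is a fanout-free cone rooted at x, S_y is a fanout-free cone rooted at y, and some node n lies in both S_x and S_y, then there is a directed path between x and y: either Relation.ReflTransGen adj x y or Relation.ReflTransGen adj y x. (Paper's Theorem 1: if one node is contained in both MFFCs of node x and node y, there is a path between x and y.) -/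
theorem overlapping_mffc_roots_connected {V : Type*} (adj : V → V → Prop)
    (Sx Sy : Set V) (x y : V)
    (hx : IsFanoutFreeCone adj Sx x) (hy : IsFanoutFreeCone adj Sy y)
    {n : V} (hnx : n ∈ Sx) (hny : n ∈ Sy) :
    Relation.ReflTransGen adj x y ∨ Relation.ReflTransGen adj y x := by
  obtain ⟨-, hx2, -⟩ := hx
  obtain ⟨-, hy2, hy3⟩ := hy
  have hpath : Relation.ReflTransGen adj n x := hx2 n hnx
  clear hnx hx2
  induction hpath using Relation.ReflTransGen.head_induction_on with
  | refl => exact Or.inl (hy2 x hny)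
  | head hadj htail ih =>
    rename_i a b
    by_cases hay : a = y
    · subst hay
      exact Or.inr (Relation.ReflTransGen.head hadj htail)
    · exact ih (hy3 a hny hay b hadj)
end

section
/- Let V be a type with a directed-edge relation adj : V → V → Prop and a level function ℓ : V → ℕ (adj u v implies ℓ u < ℓ v). Let S_x be a fanout-free cone rooted at x and S_y a fanout-free cone rooted at y, with x ≠ y and ℓ x = ℓ y. Then S_x and S_y are disjoint: S_x ∩ S_y = ∅. (Paper's Theorem 2: given a set of nodes that have the same level in an AIG, the MFFCs of these nodes do not overlap with each other.) -/
theorem same_level_mffcs_disjoint {V : Type*} (adj : V → V → Prop) (ℓ : V → ℕ)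
    (hlevel : ∀ u v, adj u v → ℓ u < ℓ v)
    (Sx Sy : Set V) (x y : V)
    (hx : IsFanoutFreeCone adj Sx x) (hy : IsFanoutFreeCone adj Sy y)
    (hxy : x ≠ y) (hl : ℓ x = ℓ y) :
    Sx ∩ Sy = ∅ := by
  -- level is weakly monotone (strictly if endpoints differ) along paths
  have hmono : ∀ a b, Relation.ReflTransGen adj a b → a = b ∨ ℓ a < ℓ b := by
    intro a b hab
    induction hab with
    | refl => exact Or.inl rfl
    | tail _ hbc ih =>
      right
      rcases ih with rfl | h
      · exact hlevel _ _ hbc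
      · exact h.trans (hlevel _ _ hbc)
  -- from a node of the cone, any path stays in the cone or passes through the root
  have hcone : ∀ (S : Set V) (v : V), IsFanoutFreeCone adj S v →
      ∀ a b, a ∈ S → Relation.ReflTransGen adj a b →
        b ∈ S ∨ Relation.ReflTransGen adj v b := by
    intro S v ⟨hvS, _, hclosed⟩ a b haS hab
    induction hab with
    | refl => exact Or.inl haS
    | @tail p q hap hpq ih =>
      rcases ih with hpS | hvp
      · by_cases hpv : p = v
        · exact Or.inr (Relation.ReflTransGen.single (hpv ▸ hpq))
        · exact Or.inl (hclosed p hpS hpv q hpq)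
      · exact Or.inr (hvp.tail hpq)
  ext n
  simp only [Set.mem_inter_iff, Set.mem_empty_iff_false, iff_false]
  rintro ⟨hnx, hny⟩
  obtain ⟨_, hpathy, _⟩ := hy
  have hny' := hpathy n hny
  rcases hcone Sx x hx n y hnx hny' with hySx | hxy'
  · -- y ∈ Sx, so there is a path y → x
    obtain ⟨_, hpathx, _⟩ := hx
    rcases hmono y x (hpathx y hySx) with rfl | h
    · exact hxy rfl
    · omega
  · rcases hmono x y hxy' with rfl | h
    · exact hxy rfl
    · omega
end

section
/- Let V be a type with a directed-edge relation adj : V → V → Prop. If S_x is a fanout-free cone rooted at x, S_y is a fanout-free cone rooted at y, x ≠ y, and some node n lies in both S_x and S_y, then there is a nontrivial directed path between x and y: either Relation.TransGen adj x y or Relation.TransGen adj y x. -/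
private lemma cone_path_aux {V : Type*} {adj : V → V → Prop} {Sy : Set V} {y x : V}
    (hclosed : ∀ n ∈ Sy, n ≠ y → ∀ m, adj n m → m ∈ Sy) :
    ∀ {n : V}, Relation.ReflTransGen adj n x → n ∈ Sy →
      Relation.ReflTransGen adj y x ∨ x ∈ Sy := by
  intro n h
  induction h using Relation.ReflTransGen.head_induction_on with
  | refl => intro hn; exact Or.inr hn
  | head hab _ ih =>
    intro hn
    rename_i a b _
    by_cases hay : a = y
    · subst hay
      exact Or.inl (Relation.ReflTransGen.head hab (by assumption))
    · exact ih (hclosed a hn hay b hab)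

theorem overlapping_mffc_distinct_roots_strictly_connected {V : Type*}
    (adj : V → V → Prop) (Sx Sy : Set V) (x y : V)
    (hx : IsFanoutFreeCone adj Sx x) (hy : IsFanoutFreeCone adj Sy y)
    (hxy : x ≠ y) {n : V} (hnx : n ∈ Sx) (hny : n ∈ Sy) :
    Relation.TransGen adj x y ∨ Relation.TransGen adj y x := by
  obtain ⟨-, hxpath, -⟩ := hx
  obtain ⟨-, hypath, hyclosed⟩ := hy
  have key := cone_path_aux hyclosed (hxpath n hnx) hny
  have toTrans : ∀ {a b : V}, Relation.ReflTransGen adj a b → a ≠ b →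
      Relation.TransGen adj a b := by
    intro a b hab hne
    rcases hab.cases_head with h | ⟨c, hac, hcb⟩
    · exact absurd h hne
    · exact Relation.TransGen.head' hac hcb
  rcases key with h | h
  · exact Or.inr (toTrans h (Ne.symm hxy))
  · exact Or.inl (toTrans (hypath x h) hxy)
end
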